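/- Under the setup of the signature algorithm, suppose Ỹ(n) is the response of the current piecewise-linear control with slopes (c̃(n)_k), and on each interval [(k−1)δ, kδ] one corrects the response by prepending the linear path L(Ỹ(n)_{(k−1)δ}, Y_{(k−1)δ}) and appending L(Y_{kδ}, Ỹ(n)_{kδ}). Then the increment of the inverse Itô integral ∫ f(·)^{-1} dY over the linear connector L(a, b) (traversed from a to b over the whole interval reparametrized to [0, δ]) equals ((b − a)/δ) · (1/δ)∫₀^δ f(L(a,b)_u)^{-1} du · δ = (b − a)·(1/δ)∫₀^δ f(L(a,b)_u)^{-1} du, giving the update r(n+1)_k = ((Y_{kδ} − Ỹ(n)_{kδ})/δ)·(1/δ)∫₀^δ f(L(Ỹ(n)_{kδ}, Y_{kδ})_u)^{-1} du for the correction terms, and the new slopes satisfy c̃(n+1)_k = c̃(n)_k + (r(n+1)_k − r(n+1)_{k−1}) with r(n+1)_0 = 0. -/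
import Mathlib


/- STATEMENT 13 (Proposition 3.1): the path-space signature algorithm reduces to an
explicit recursion on slopes.  Ỹ(n) is the response of the piecewise linear control
with slopes c̃(n)_k; the corrected response prepends/appends linear connectors
L(Ỹ_{(k−1)δ}, Y_{k−1}) and L(Y_{kδ}, Ỹ_{kδ}).  The inverse Itô increment over the
connector L(a,b) equals ((1/δ)∫₀^δ f(L(a,b)_u)⁻¹ du)(b − a), so with
r_k = ((1/δ)∫₀^δ f(L(Ỹ_{kδ},Y_{kδ})_u)⁻¹ du)((Y_{kδ} − Ỹ_{kδ})/δ), r_0 = 0, the new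
slopes satisfy c̃(n+1)_k = c̃(n)_k + (r_k − r_{k−1}). -/
theorem stmt13 {d : ℕ} (N : ℕ) (hN : 1 ≤ N) (δ : ℝ) (hδ : 0 < δ)
    (f : EuclideanSpace ℝ (Fin d) →
      (EuclideanSpace ℝ (Fin d) →L[ℝ] EuclideanSpace ℝ (Fin d)))
    (hf : Continuous f) (hfinv : ∀ y, IsUnit (f y))
    (Y : ℕ → EuclideanSpace ℝ (Fin d))
    (ctil cnew : ℕ → EuclideanSpace ℝ (Fin d))
    (Ytil : ℝ → EuclideanSpace ℝ (Fin d))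
    (hstart : Ytil 0 = Y 0)
    (hYtil : ∀ k, 1 ≤ k → k ≤ N →
      ∀ t ∈ Set.Icc (((k:ℝ)-1)*δ) ((k:ℝ)*δ),
        HasDerivAt Ytil (f (Ytil t) (ctil k)) t)
    (r : ℕ → EuclideanSpace ℝ (Fin d))
    (hr0 : r 0 = 0)
    (hr : ∀ k, 1 ≤ k → r k =
      δ⁻¹ • ∫ u in (0:ℝ)..δ,
        (Ring.inverse (f (Ytil ((k:ℝ)*δ) + (u/δ) • (Y k - Ytil ((k:ℝ)*δ)))))
          (δ⁻¹ • (Y k - Ytil ((k:ℝ)*δ))))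
    (hcnew : ∀ k, 1 ≤ k → cnew k =
      δ⁻¹ • (
        (∫ u in (0:ℝ)..δ,
          (Ring.inverse (f (Y (k-1) + (u/δ) • (Ytil (((k:ℝ)-1)*δ) - Y (k-1)))))
            (δ⁻¹ • (Ytil (((k:ℝ)-1)*δ) - Y (k-1)))) +
        (∫ t in (((k:ℝ)-1)*δ)..((k:ℝ)*δ),
          (Ring.inverse (f (Ytil t))) ((f (Ytil t)) (ctil k))) +
        (∫ u in (0:ℝ)..δ,
          (Ring.inverse (f (Ytil ((k:ℝ)*δ) + (u/δ) • (Y k - Ytil ((k:ℝ)*δ)))))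
            (δ⁻¹ • (Y k - Ytil ((k:ℝ)*δ)))))) :
    (∀ a b : EuclideanSpace ℝ (Fin d),
      (∫ u in (0:ℝ)..δ, (Ring.inverse (f (a + (u/δ) • (b - a)))) (δ⁻¹ • (b - a)))
        = (δ⁻¹ • ∫ u in (0:ℝ)..δ, Ring.inverse (f (a + (u/δ) • (b - a)))) (b - a))
    ∧ ∀ k, 1 ≤ k → k ≤ N → cnew k = ctil k + (r k - r (k-1)) := by
  have hδ' : δ ≠ 0 := hδ.ne'
  -- continuity of `u ↦ Ring.inverse (f (c u))`
  have hcontinv : ∀ (c : ℝ → EuclideanSpace ℝ (Fin d)), Continuous c →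
      Continuous fun u => Ring.inverse (f (c u)) := by
    intro c hc
    rw [continuous_iff_continuousAt]
    intro u
    have h1 : ContinuousAt Ring.inverse (f (c u)) := by
      have := NormedRing.inverse_continuousAt (hfinv (c u)).unit
      rwa [IsUnit.unit_spec] at this
    have h2 : ContinuousAt (fun u => f (c u)) u := (hf.comp hc).continuousAt
    exact ContinuousAt.comp (g := Ring.inverse) (f := fun u => f (c u)) h1 h2
  have hid : ∀ (y v : EuclideanSpace ℝ (Fin d)),
      (Ring.inverse (f y)) ((f y) v) = v := by
    intro y v
    rw [← ContinuousLinearMap.mul_apply, Ring.inverse_mul_cancel _ (hfinv y),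
      ContinuousLinearMap.one_apply]
  constructor
  · intro a b
    have hpath : Continuous fun u : ℝ => a + (u / δ) • (b - a) := by
      fun_prop
    have hint : IntervalIntegrable
        (fun u => Ring.inverse (f (a + (u / δ) • (b - a))))
        MeasureTheory.volume 0 δ :=
      (hcontinv _ hpath).intervalIntegrable 0 δ
    simp only [map_smul]
    rw [intervalIntegral.integral_smul, ContinuousLinearMap.smul_apply,
      ContinuousLinearMap.intervalIntegral_apply hint]
  · intro k hk1 hkN
    rw [hcnew k hk1]
    -- the appended connector integral equals δ • r k
    have hQ : (∫ u in (0:ℝ)..δ,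
        (Ring.inverse (f (Ytil ((k:ℝ)*δ) + (u/δ) • (Y k - Ytil ((k:ℝ)*δ)))))
          (δ⁻¹ • (Y k - Ytil ((k:ℝ)*δ)))) = δ • r k := by
      rw [hr k hk1, smul_smul, mul_inv_cancel₀ hδ', one_smul]
    -- the middle integral equals δ • ctil k
    have hM : (∫ t in (((k:ℝ)-1)*δ)..((k:ℝ)*δ),
        (Ring.inverse (f (Ytil t))) ((f (Ytil t)) (ctil k))) = δ • ctil k := by
      simp only [hid]
      rw [intervalIntegral.integral_const]
      congr 1
      ring
    -- the prepended connector integral equals -(δ • r (k-1))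
    have hP : (∫ u in (0:ℝ)..δ,
        (Ring.inverse (f (Y (k-1) + (u/δ) • (Ytil (((k:ℝ)-1)*δ) - Y (k-1)))))
          (δ⁻¹ • (Ytil (((k:ℝ)-1)*δ) - Y (k-1)))) = -(δ • r (k-1)) := by
      rcases eq_or_lt_of_le hk1 with h1 | h2
      · -- k = 1 : both sides vanish since Ỹ(0) = Y 0
        subst h1
        have e0 : (((1:ℕ):ℝ) - 1) * δ = 0 := by norm_num
        simp [e0, hstart, hr0]
      · -- k ≥ 2 : reverse-path substitution u ↦ δ - u
        have hk2 : 1 ≤ k - 1 := by omega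
        have hcast : (((k-1:ℕ)):ℝ) = (k:ℝ) - 1 := by
          push_cast [hk1]; ring
        set A := Ytil (((k:ℝ)-1)*δ) with hA
        set B := Y (k-1) with hB
        have hrk : r (k-1) = δ⁻¹ • ∫ u in (0:ℝ)..δ,
            (Ring.inverse (f (A + (u/δ) • (B - A)))) (δ⁻¹ • (B - A)) := by
          rw [hr (k-1) hk2, hcast]
        set h : ℝ → EuclideanSpace ℝ (Fin d) :=
          fun u => (Ring.inverse (f (A + (u/δ) • (B - A)))) (δ⁻¹ • (B - A)) with hh
        have key : ∀ u : ℝ,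
            (Ring.inverse (f (B + (u/δ) • (A - B)))) (δ⁻¹ • (A - B))
              = -(h (δ - u)) := by
          intro u
          have e1 : (δ - u)/δ = 1 - u/δ := by field_simp
          have e2 : B + (u/δ) • (A - B) = A + ((δ - u)/δ) • (B - A) := by
            rw [e1]; module
          have e3 : δ⁻¹ • (A - B) = -(δ⁻¹ • (B - A)) := by
            rw [← smul_neg, neg_sub]
          rw [e2, e3, map_neg]
        calc (∫ u in (0:ℝ)..δ,
              (Ring.inverse (f (B + (u/δ) • (A - B)))) (δ⁻¹ • (A - B)))
            = ∫ u in (0:ℝ)..δ, (fun x => -(h x)) (δ - u) := by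
              apply intervalIntegral.integral_congr
              intro u _
              exact key u
          _ = ∫ u in δ - δ..δ - 0, -(h u) :=
              intervalIntegral.integral_comp_sub_left (fun x => -(h x)) δ
          _ = -∫ u in (0:ℝ)..δ, h u := by
              rw [sub_self, sub_zero, intervalIntegral.integral_neg]
          _ = -(δ • r (k-1)) := by
              rw [hrk, smul_smul, mul_inv_cancel₀ hδ', one_smul]
    rw [hP, hM, hQ]
    simp only [smul_add, smul_neg, smul_smul, inv_mul_cancel₀ hδ', one_smul]
    abel
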